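/- Let A ∈ ℂ^{n×n×n3} with ind(A) = k ≥ 1, and suppose A^k = Q *_c D *_c R, where Q ∈ ℂ^{n×r×n3}, D ∈ ℂ^{r×r×n3} is an invertible F-diagonal tensor, R ∈ ℂ^{r×n×n3}, and the tensors Q^H *_c Q and R *_c R^H are invertible (a C-QDR decomposition of A^k). Then the tensor R *_c A *_c Q is invertible and the Drazin inverse of A is A^D = Q *_c (R *_c A *_c Q)^{-1} *_c R. -/

import Mathlib

noncomputable section

/-- A third-order tensor: a family of frontal slices. -/
abbrev Tensor (n1 n2 n3 : ℕ) : Type := Fin n3 → Matrix (Fin n1) (Fin n2) ℂ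

namespace Tensor

/-- The block Toeplitz-plus-Hankel matrix `mat(A)` associated to a tensor. -/
def matT {n1 n2 n3 : ℕ} (A : Tensor n1 n2 n3) :
    Matrix (Fin n3 × Fin n1) (Fin n3 × Fin n2) ℂ := fun p q =>
  A ⟨p.1.1 - q.1.1 + (q.1.1 - p.1.1), by
        have h1 := p.1.isLt; have h2 := q.1.isLt; omega⟩ p.2 q.2 +
    (if h : p.1.1 + q.1.1 + 2 ≤ n3 then A ⟨p.1.1 + q.1.1 + 1, by omega⟩ p.2 q.2
     else if h2 : n3 ≤ p.1.1 + q.1.1 then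
       A ⟨2 * n3 - (p.1.1 + q.1.1) - 1, by have h1 := p.1.isLt; omega⟩ p.2 q.2
     else 0)

/-- `ten`, the inverse of `mat` on its range: the slices of a tensor are recovered
from the first block-column of its `mat` by an alternating sum. -/
def tenT {n1 n2 n3 : ℕ} (M : Matrix (Fin n3 × Fin n1) (Fin n3 × Fin n2) ℂ) :
    Tensor n1 n2 n3 := fun i => Matrix.of fun a b =>
  ∑ t : Fin n3, if i.1 ≤ t.1 then (-1 : ℂ) ^ (t.1 - i.1) * M (t, a) (⟨0, i.pos⟩, b) else 0

/-- The C-product of two tensors: the unique tensor whose `mat` is `mat(A) * mat(B)`. -/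
def cmul {n1 n2 l n3 : ℕ} (A : Tensor n1 n2 n3) (B : Tensor n2 l n3) : Tensor n1 l n3 :=
  tenT (matT A * matT B)

/-- The conjugate transpose of a tensor, taken slice-wise. -/
def conjT {n1 n2 n3 : ℕ} (A : Tensor n1 n2 n3) : Tensor n2 n1 n3 := fun i => (A i).conjTranspose

/-- The identity tensor: the tensor whose `mat` is the identity matrix. -/
def idT {n n3 : ℕ} : Tensor n n n3 := fun i => if i.1 = 0 then 1 else 0

/-- A tensor is unitary if `Qᴴ *c Q = Q *c Qᴴ = I`. -/
def Unitary {n n3 : ℕ} (Q : Tensor n n n3) : Prop :=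
  cmul (conjT Q) Q = idT ∧ cmul Q (conjT Q) = idT

/-- `X` is the inverse of the square tensor `B` under the C-product. -/
def IsInverse {n n3 : ℕ} (B X : Tensor n n n3) : Prop :=
  cmul B X = idT ∧ cmul X B = idT

/-- `X` is the Moore-Penrose inverse of `A` under the C-product. -/
def IsMP {n1 n2 n3 : ℕ} (A : Tensor n1 n2 n3) (X : Tensor n2 n1 n3) : Prop :=
  cmul (cmul A X) A = A ∧ cmul (cmul X A) X = X ∧
    conjT (cmul A X) = cmul A X ∧ conjT (cmul X A) = cmul X A

/-- Powers of a square tensor with respect to the C-product. -/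
def cpow {n n3 : ℕ} (A : Tensor n n n3) : ℕ → Tensor n n n3
  | 0 => idT
  | m + 1 => cmul (cpow A m) A

/-- `ind(A) = k`: `k` is the smallest nonnegative integer with
`rank(mat(A)^k) = rank(mat(A)^(k+1))`. -/
def IsIndex {n n3 : ℕ} (A : Tensor n n n3) (k : ℕ) : Prop :=
  (matT A ^ k).rank = (matT A ^ (k + 1)).rank ∧
    ∀ j < k, (matT A ^ j).rank ≠ (matT A ^ (j + 1)).rank

/-- `X` is the Drazin inverse of `A` (of index `k`) under the C-product. -/
def IsDrazin {n n3 : ℕ} (A : Tensor n n n3) (k : ℕ) (X : Tensor n n n3) : Prop :=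
  cmul (cpow A (k + 1)) X = cpow A k ∧ cmul (cmul X A) X = X ∧ cmul A X = cmul X A

/-- `X` is an inverse of `A` along `G` under the C-product. -/
def IsInvAlong {n1 n2 n3 : ℕ} (A : Tensor n1 n2 n3) (G X : Tensor n2 n1 n3) : Prop :=
  cmul (cmul X A) G = G ∧ cmul (cmul G A) X = G ∧
    (∃ U : Tensor n1 n1 n3, X = cmul G U) ∧
    (∃ V : Tensor n2 n2 n3, conjT X = cmul (conjT G) V)

/-- All frontal slices are diagonal. -/
def FDiag {n1 n2 n3 : ℕ} (A : Tensor n1 n2 n3) : Prop :=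
  ∀ (i : Fin n3) (a : Fin n1) (b : Fin n2), (a : ℕ) ≠ (b : ℕ) → A i a b = 0

/-- All frontal slices are upper triangular. -/
def FUpper {n1 n2 n3 : ℕ} (A : Tensor n1 n2 n3) : Prop :=
  ∀ (i : Fin n3) (a : Fin n1) (b : Fin n2), (b : ℕ) < (a : ℕ) → A i a b = 0

/-- All frontal slices are lower triangular. -/
def FLower {n1 n2 n3 : ℕ} (A : Tensor n1 n2 n3) : Prop :=
  ∀ (i : Fin n3) (a : Fin n1) (b : Fin n2), (a : ℕ) < (b : ℕ) → A i a b = 0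

/-- Slice-wise 2×2 block tensor `[[A, B],[C, D]]`. -/
def blockT {r s t u n3 : ℕ} (A : Tensor r t n3) (B : Tensor r u n3)
    (C : Tensor s t n3) (D : Tensor s u n3) : Tensor (r + s) (t + u) n3 := fun i =>
  Matrix.reindex finSumFinEquiv finSumFinEquiv (Matrix.fromBlocks (A i) (B i) (C i) (D i))

/-- The mode-3 product of a tensor with an `n3 × n3` matrix. -/
def mode3 {n1 n2 n3 : ℕ} (A : Tensor n1 n2 n3) (M : Matrix (Fin n3) (Fin n3) ℂ) :
    Tensor n1 n2 n3 := fun l => ∑ i, M l i • A i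

end Tensor

open Tensor

/-!
`mat` is injective and multiplicative, so the theorem is a statement about block matrices.
The `(p, q)` block of `mat A` is `f (p - q) + f (p + q + 1)`, where `f` is the tube sequence of
`A` padded by `0` at `n3` and reflected at `0` and `n3`; this kernel is unchanged by the
reflections `p ↦ -1 - p` and `p ↦ 2 n3 - 1 - p`, which are exactly what the tridiagonal shift
`S` with reflecting ends applies at the boundary. Hence `mat A` commutes with `S ⊗ I`, and a
matrix commuting with `S ⊗ I` is determined by its first block column, from which `ten` reads off
the slices. So `mat (ten M) = M` on this commutant, which is closed under products.

For `M = mat A`, equal ranks of `M ^ k` and `M ^ (k + 1)` give `M ^ k = M ^ (k + 1) C`, hence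
`M ^ k = M ^ (2k + 1) C ^ (k + 1)`. With `M ^ k = Q D R`, `L Q = 1` and `R R' = 1` this yields
`(R M Q) (D R C ^ (k + 1) R') = 1`. Moreover `M Q = Q T` and `R M = T' R`, so
`R M Q = (R Q) T = T' (R Q)`, and both `M X` and `X M` equal `Q (R Q)⁻¹ R` for
`X = Q (R M Q)⁻¹ R`; the Drazin equations follow.
-/

lemma pow_eq_pow_add_mul_pow {M : Type*} [Monoid M] {a c : M} {k : ℕ}
    (h : a ^ k = a ^ (k + 1) * c) (j : ℕ) : a ^ k = a ^ (k + j) * c ^ j := by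
  induction j with
  | zero => simp
  | succ j ih =>
    calc a ^ k = a ^ j * a ^ k * c ^ j := by rw [← pow_add, add_comm j, ← ih]
      _ = a ^ (k + (j + 1)) * c ^ (j + 1) := by
        rw [h, pow_succ' c]
        simp only [mul_assoc]
        rw [← mul_assoc, ← pow_add, show j + (k + 1) = k + (j + 1) by omega]

namespace Matrix

lemma exists_eq_mul_of_range_le {R m n l : Type*} [CommSemiring R] [Fintype n] [DecidableEq n]
    [Fintype l] {A : Matrix m n R} {B : Matrix m l R}
    (h : LinearMap.range A.mulVecLin ≤ LinearMap.range B.mulVecLin) : ∃ C, A = B * C := by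
  choose c hc using fun j => h ⟨Pi.single j 1, rfl⟩
  refine ⟨of fun i j => c j i, ?_⟩
  ext i j
  have := congrFun (hc j) i
  simp only [mulVecLin_apply, mulVec_single_one] at this
  exact this.symm

variable {K : Type*} [Field K] {m : Type*} [Fintype m] [DecidableEq m]

lemma exists_pow_eq_pow_succ_mul_of_rank_eq (M : Matrix m m K) {k : ℕ}
    (h : (M ^ k).rank = (M ^ (k + 1)).rank) : ∃ C, M ^ k = M ^ (k + 1) * C := by
  have hle : LinearMap.range (M ^ (k + 1)).mulVecLin ≤ LinearMap.range (M ^ k).mulVecLin := by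
    rw [pow_succ, mulVecLin_mul]
    exact LinearMap.range_comp_le_range _ _
  exact exists_eq_mul_of_range_le (Submodule.eq_of_le_of_finrank_le hle h.le).ge

def IsDrazinInv (M X : Matrix m m K) (k : ℕ) : Prop :=
  M ^ (k + 1) * X = M ^ k ∧ X * M * X = X ∧ M * X = X * M

section Factorization

variable {r : Type*} [Fintype r] [DecidableEq r] {M : Matrix m m K} {Q : Matrix m r K}
  {D : Matrix r r K} {R : Matrix r m K} {k : ℕ}

lemma exists_mul_eq_mul_of_pow_eq (hdec : M ^ k = Q * D * R) (hD : IsUnit D)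
    {R' : Matrix m r K} (hR : R * R' = 1) : ∃ T : Matrix r r K, M * Q = Q * T := by
  have hD' := (isUnit_iff_isUnit_det D).mp hD
  refine ⟨D * R * M * R' * D⁻¹, ?_⟩
  calc M * Q = M * Q * (D * (R * R') * D⁻¹) := by
        rw [hR, Matrix.mul_one, mul_nonsing_inv _ hD', Matrix.mul_one]
    _ = M * M ^ k * R' * D⁻¹ := by rw [hdec]; simp only [Matrix.mul_assoc]
    _ = M ^ k * M * R' * D⁻¹ := by rw [← pow_succ, pow_succ']
    _ = Q * (D * R * M * R' * D⁻¹) := by rw [hdec]; simp only [Matrix.mul_assoc]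

lemma exists_mul_eq_mul_of_pow_eq' (hdec : M ^ k = Q * D * R) (hD : IsUnit D)
    {L : Matrix r m K} (hL : L * Q = 1) : ∃ T : Matrix r r K, R * M = T * R := by
  have hD' := (isUnit_iff_isUnit_det D).mp hD
  refine ⟨D⁻¹ * L * M * Q * D, ?_⟩
  calc R * M = D⁻¹ * ((L * Q) * D) * R * M := by
        rw [hL, Matrix.one_mul, nonsing_inv_mul _ hD', Matrix.one_mul]
    _ = D⁻¹ * L * (M ^ k * M) := by rw [hdec]; simp only [Matrix.mul_assoc]
    _ = D⁻¹ * L * (M * M ^ k) := by rw [← pow_succ, pow_succ']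
    _ = D⁻¹ * L * M * Q * D * R := by rw [hdec]; simp only [Matrix.mul_assoc]

lemma isUnit_mul_mul_of_pow_eq {C : Matrix m m K} (hC : M ^ k = M ^ (k + 1) * C)
    (hdec : M ^ k = Q * D * R) (hD : IsUnit D) {L : Matrix r m K} (hL : L * Q = 1)
    {R' : Matrix m r K} (hR : R * R' = 1) : IsUnit (R * M * Q) := by
  have hD' := (isUnit_iff_isUnit_det D).mp hD
  refine IsUnit.of_mul_eq_one (D * R * C ^ (k + 1) * R') ?_
  calc R * M * Q * (D * R * C ^ (k + 1) * R')
      = D⁻¹ * (L * Q) * D * R * M * Q * D * R * C ^ (k + 1) * R' := by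
        rw [hL, Matrix.mul_one, nonsing_inv_mul _ hD', Matrix.one_mul]
        simp only [Matrix.mul_assoc]
    _ = D⁻¹ * L * (M ^ k * M * M ^ k * C ^ (k + 1)) * R' := by
        rw [hdec]; simp only [Matrix.mul_assoc]
    _ = D⁻¹ * (L * Q) * D * (R * R') := by
        rw [← pow_succ, ← pow_add, add_comm (k + 1), ← pow_eq_pow_add_mul_pow hC, hdec]
        simp only [Matrix.mul_assoc]
    _ = 1 := by rw [hL, hR, Matrix.mul_one, Matrix.mul_one, nonsing_inv_mul _ hD']

lemma isDrazinInv_of_pow_eq (hG : IsUnit (R * M * Q)) (hdec : M ^ k = Q * D * R)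
    (hD : IsUnit D) {L : Matrix r m K} (hL : L * Q = 1) {R' : Matrix m r K} (hR : R * R' = 1) :
    IsDrazinInv M (Q * (R * M * Q)⁻¹ * R) k := by
  obtain ⟨T, hMQ⟩ := exists_mul_eq_mul_of_pow_eq hdec hD hR
  obtain ⟨T', hRM⟩ := exists_mul_eq_mul_of_pow_eq' hdec hD hL
  have hT : R * M * Q = R * Q * T := by rw [Matrix.mul_assoc, hMQ, Matrix.mul_assoc]
  have hT' : R * M * Q = T' * (R * Q) := by rw [hRM, Matrix.mul_assoc]
  have hK : IsUnit (R * Q) := isUnit_of_mul_isUnit_left (hT ▸ hG)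
  generalize hGdef : R * M * Q = G at hG hT hT' ⊢
  generalize hKdef : R * Q = K at hK hT hT'
  have hG' := (isUnit_iff_isUnit_det G).mp hG
  have hK' := (isUnit_iff_isUnit_det K).mp hK
  have hTG : T = K⁻¹ * G := by rw [hT, nonsing_inv_mul_cancel_left _ _ hK']
  have hT'G : T' = G * K⁻¹ := by rw [hT', mul_nonsing_inv_cancel_right _ _ hK']
  have hMX : M * (Q * G⁻¹ * R) = Q * K⁻¹ * R := by
    rw [← Matrix.mul_assoc, ← Matrix.mul_assoc, hMQ, hTG]
    simp only [Matrix.mul_assoc, mul_nonsing_inv_cancel_left _ _ hG']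
  have hXM : Q * G⁻¹ * R * M = Q * K⁻¹ * R := by
    rw [Matrix.mul_assoc, hRM, hT'G]
    simp only [Matrix.mul_assoc, nonsing_inv_mul_cancel_left _ _ hG']
  refine ⟨?_, ?_, hMX.trans hXM.symm⟩
  · calc M ^ (k + 1) * (Q * G⁻¹ * R) = Q * D * ((R * Q) * K⁻¹) * R := by
          rw [pow_succ, Matrix.mul_assoc, hMX, hdec]; simp only [Matrix.mul_assoc]
      _ = M ^ k := by rw [hKdef, mul_nonsing_inv _ hK', Matrix.mul_one, hdec]
  · calc Q * G⁻¹ * R * M * (Q * G⁻¹ * R) = Q * (K⁻¹ * (R * Q)) * G⁻¹ * R := by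
          rw [hXM]; simp only [Matrix.mul_assoc]
      _ = Q * G⁻¹ * R := by rw [hKdef, nonsing_inv_mul _ hK', Matrix.mul_one]

end Factorization

end Matrix

namespace Tensor

open scoped Matrix Kronecker

def foldIdx (n : ℕ) (x : ℤ) : ℕ := min x.natAbs (2 * n - x.natAbs)

def thKernel (n : ℕ) (f : ℕ → ℂ) (x y : ℤ) : ℂ :=
  f (foldIdx n (x - y)) + f (foldIdx n (x + y + 1))

section Kernel

variable {n : ℕ} (f : ℕ → ℂ)

lemma thKernel_comm (x y : ℤ) : thKernel n f x y = thKernel n f y x := by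
  unfold thKernel foldIdx
  congr 2 <;> omega

lemma thKernel_succ_add_pred (x y : ℤ) :
    thKernel n f (x + 1) y + thKernel n f (x - 1) y =
      thKernel n f x (y + 1) + thKernel n f x (y - 1) := by
  unfold thKernel
  ring_nf

lemma thKernel_neg_one (y : ℤ) : thKernel n f (-1) y = thKernel n f 0 y := by
  unfold thKernel foldIdx
  rw [add_comm]
  congr 2 <;> omega

lemma thKernel_last {y : ℕ} (hy : y < n) : thKernel n f n y = thKernel n f (n - 1) y := by
  unfold thKernel foldIdx
  rw [add_comm]
  congr 2 <;> omega

end Kernel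

variable {n1 n2 n3 : ℕ}

def tube (A : Tensor n1 n2 n3) (a : Fin n1) (b : Fin n2) (i : ℕ) : ℂ :=
  if h : i < n3 then A ⟨i, h⟩ a b else 0

lemma matT_apply (A : Tensor n1 n2 n3) (p q : Fin n3) (a : Fin n1) (b : Fin n2) :
    matT A (p, a) (q, b) = thKernel n3 (tube A a b) p q := by
  have hp := p.isLt
  have hq := q.isLt
  unfold matT thKernel tube foldIdx
  dsimp only
  congr 1
  · rw [dif_pos (by omega)]
    congr 2
    omega
  · split_ifs <;> first | rfl | omega | (congr 2; omega)

def stepUp (p : Fin n3) : Fin n3 := if h : p.1 + 1 < n3 then ⟨p.1 + 1, h⟩ else p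

def stepDown (p : Fin n3) : Fin n3 := if h : 1 ≤ p.1 then ⟨p.1 - 1, by omega⟩ else p

lemma val_stepUp (p : Fin n3) : (stepUp p : ℕ) = if p.1 + 1 < n3 then p.1 + 1 else p.1 := by
  unfold stepUp; split_ifs <;> rfl

lemma val_stepDown (p : Fin n3) : (stepDown p : ℕ) = if 1 ≤ p.1 then p.1 - 1 else p.1 := by
  unfold stepDown; split_ifs <;> rfl

lemma thKernel_stepUp (f : ℕ → ℂ) (p q : Fin n3) :
    thKernel n3 f (stepUp p) q = thKernel n3 f (p + 1) q := by
  unfold stepUp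
  split_ifs with h
  · push_cast; rfl
  · rw [show ((p : ℕ) : ℤ) + 1 = ((n3 : ℕ) : ℤ) by omega, thKernel_last f q.isLt]
    congr 1
    omega

lemma thKernel_stepDown (f : ℕ → ℂ) (p q : Fin n3) :
    thKernel n3 f (stepDown p) q = thKernel n3 f (p - 1) q := by
  unfold stepDown
  split_ifs with h
  · push_cast [h]; rfl
  · rw [show (p : ℤ) - 1 = -1 by omega, thKernel_neg_one]
    congr 1
    omega

-- Ones on both off-diagonals and at the two diagonal corners (the single entry is `2` if `n3 = 1`).
def shiftMatrix (n3 : ℕ) : Matrix (Fin n3) (Fin n3) ℂ :=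
  Matrix.of fun p t => (if stepUp p = t then 1 else 0) + (if stepDown p = t then 1 else 0)

lemma shiftMatrix_transpose : (shiftMatrix n3)ᵀ = shiftMatrix n3 := by
  ext p t
  simp only [Matrix.transpose_apply, shiftMatrix, Matrix.of_apply, Fin.ext_iff, val_stepUp,
    val_stepDown]
  split_ifs <;> first | omega | norm_num

def blockShift (n3 m : ℕ) : Matrix (Fin n3 × Fin m) (Fin n3 × Fin m) ℂ :=
  shiftMatrix n3 ⊗ₖ 1

lemma blockShift_mul_apply {l : Type*} [Fintype l] (M : Matrix (Fin n3 × Fin n1) l ℂ)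
    (p : Fin n3) (a : Fin n1) (x : l) :
    (blockShift n3 n1 * M) (p, a) x = M (stepUp p, a) x + M (stepDown p, a) x := by
  simp [blockShift, Matrix.mul_apply, Fintype.sum_prod_type, Matrix.one_apply, shiftMatrix,
    add_mul, Finset.sum_add_distrib]

lemma mul_blockShift_apply {l : Type*} [Fintype l] (M : Matrix l (Fin n3 × Fin n2) ℂ) (x : l)
    (q : Fin n3) (b : Fin n2) :
    (M * blockShift n3 n2) x (q, b) = M x (stepUp q, b) + M x (stepDown q, b) := by
  rw [blockShift, ← shiftMatrix_transpose]
  simp [Matrix.mul_apply, Fintype.sum_prod_type, Matrix.one_apply, shiftMatrix,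
    mul_add, Finset.sum_add_distrib]

lemma blockShift_mul_matT (A : Tensor n1 n2 n3) :
    blockShift n3 n1 * matT A = matT A * blockShift n3 n2 := by
  ext ⟨p, a⟩ ⟨q, b⟩
  rw [blockShift_mul_apply, mul_blockShift_apply]
  simp only [matT_apply, thKernel_stepUp, thKernel_stepDown]
  rw [thKernel_comm _ p (stepUp q), thKernel_comm _ p (stepDown q), thKernel_stepUp,
    thKernel_stepDown, thKernel_comm _ (q + 1), thKernel_comm _ (q - 1)]
  exact thKernel_succ_add_pred _ _ _

def altTail (n : ℕ) (u : ℕ → ℂ) (j : ℕ) : ℂ :=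
  ∑ t ∈ Finset.range n, if j ≤ t then (-1) ^ (t - j) * u t else 0

lemma altTail_add_succ {n j : ℕ} (u : ℕ → ℂ) (hj : j < n) :
    altTail n u j + altTail n u (j + 1) = u j := by
  have hu : u j = ∑ t ∈ Finset.range n, if t = j then u t else 0 := by simp [hj]
  rw [altTail, altTail, ← Finset.sum_add_distrib, hu]
  refine Finset.sum_congr rfl fun t _ => ?_
  rcases lt_trichotomy t j with h | rfl | h
  · simp [h.ne, h.not_ge, show ¬ j + 1 ≤ t by omega]
  · simp
  · rw [if_pos h.le, if_pos (show j + 1 ≤ t by omega), if_neg h.ne',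
      show t - j = t - (j + 1) + 1 by omega, pow_succ]
    ring

lemma altTail_of_le {n j : ℕ} (u : ℕ → ℂ) (hj : n ≤ j) : altTail n u j = 0 :=
  Finset.sum_eq_zero fun t ht => if_neg (by simp at ht; omega)

lemma altTail_telescope {n : ℕ} (w : ℕ → ℂ) (hw : w n = 0) {j : ℕ} (hj : j ≤ n) :
    altTail n (fun t => w t + w (t + 1)) j = w j := by
  induction h : n - j generalizing j with
  | zero => rw [altTail_of_le _ (by omega), show j = n by omega, hw]
  | succ m ih =>
    have := altTail_add_succ (fun t => w t + w (t + 1)) (show j < n by omega)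
    rw [ih (j := j + 1) (by omega) (by omega)] at this
    linear_combination this

lemma matT_apply_zero (A : Tensor n1 n2 n3) (p : Fin n3) (a : Fin n1) (b : Fin n2)
    (h0 : 0 < n3) : matT A (p, a) (⟨0, h0⟩, b) = tube A a b p + tube A a b (p + 1) := by
  rw [matT_apply, thKernel]
  congr 2 <;> simp [foldIdx] <;> omega

lemma tube_tenT (M : Matrix (Fin n3 × Fin n1) (Fin n3 × Fin n2) ℂ) (a : Fin n1) (b : Fin n2)
    (h0 : 0 < n3) :
    tube (tenT M) a b =
      altTail n3 (fun t => if h : t < n3 then M (⟨t, h⟩, a) (⟨0, h0⟩, b) else 0) := by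
  ext j
  unfold tube
  split_ifs with hj
  · simp only [tenT, Matrix.of_apply, altTail]
    rw [← Fin.sum_univ_eq_sum_range]
    simp
  · exact (altTail_of_le _ (by omega)).symm

lemma tenT_matT (A : Tensor n1 n2 n3) : tenT (matT A) = A := by
  funext i
  ext a b
  have h0 : 0 < n3 := i.pos
  have hcol : (fun t => if h : t < n3 then matT A (⟨t, h⟩, a) (⟨0, h0⟩, b) else 0) =
      fun t => tube A a b t + tube A a b (t + 1) := by
    ext t
    split_ifs with h
    · exact matT_apply_zero A _ a b h0
    · simp [tube, h, show ¬ t + 1 < n3 by omega]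
  have := congrFun (tube_tenT (matT A) a b h0) i
  rw [hcol, altTail_telescope _ (by simp [tube]) i.isLt.le] at this
  simpa [tube] using this

lemma matT_tenT_apply_zero (M : Matrix (Fin n3 × Fin n1) (Fin n3 × Fin n2) ℂ) (p : Fin n3)
    (a : Fin n1) (b : Fin n2) (h0 : 0 < n3) :
    matT (tenT M) (p, a) (⟨0, h0⟩, b) = M (p, a) (⟨0, h0⟩, b) := by
  rw [matT_apply_zero _ _ _ _ h0, tube_tenT _ _ _ h0, altTail_add_succ _ p.isLt, dif_pos p.isLt]

lemma eq_zero_of_blockShift_mul_eq {Z : Matrix (Fin n3 × Fin n1) (Fin n3 × Fin n2) ℂ}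
    (hZ : blockShift n3 n1 * Z = Z * blockShift n3 n2)
    (hcol : ∀ p a b (h0 : 0 < n3), Z (p, a) (⟨0, h0⟩, b) = 0) : Z = 0 := by
  suffices h : ∀ j (q : Fin n3), q.1 = j → ∀ p a b, Z (p, a) (q, b) = 0 by
    ext ⟨p, a⟩ ⟨q, b⟩
    exact h q q rfl p a b
  intro j
  induction j using Nat.strong_induction_on with
  | _ j ih =>
    intro q hq p a b
    rcases j with _ | j
    · exact hcol p a b q.pos ▸ congrArg (Z (p, a) ⟨·, b⟩) (Fin.ext hq)
    -- block column `j + 1` is read off from block column `j` of `blockShift * Z = Z * blockShift`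
    · have hj : j < n3 := by omega
      have hup : stepUp ⟨j, hj⟩ = q := Fin.ext (by simp only [val_stepUp]; split_ifs <;> omega)
      have hdown : (stepDown ⟨j, hj⟩ : ℕ) < j + 1 := by
        simp only [val_stepDown]; split_ifs <;> omega
      have e := congrFun (congrFun hZ (p, a)) (⟨j, hj⟩, b)
      rw [blockShift_mul_apply, mul_blockShift_apply, hup, ih j (by omega) _ rfl (stepUp p),
        ih j (by omega) _ rfl (stepDown p), ih _ hdown _ rfl p] at e
      simpa using e.symm

lemma matT_tenT {M : Matrix (Fin n3 × Fin n1) (Fin n3 × Fin n2) ℂ}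
    (hM : blockShift n3 n1 * M = M * blockShift n3 n2) : matT (tenT M) = M :=
  sub_eq_zero.mp <| eq_zero_of_blockShift_mul_eq
    (by rw [Matrix.mul_sub, Matrix.sub_mul, blockShift_mul_matT, hM])
    fun p a b h0 => by simp [matT_tenT_apply_zero]

lemma matT_cmul {l : ℕ} (A : Tensor n1 n2 n3) (B : Tensor n2 l n3) :
    matT (cmul A B) = matT A * matT B :=
  matT_tenT <| by
    rw [← Matrix.mul_assoc, blockShift_mul_matT, Matrix.mul_assoc, blockShift_mul_matT,
      Matrix.mul_assoc]

lemma matT_injective : Function.Injective (matT : Tensor n1 n2 n3 → _) :=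
  Function.LeftInverse.injective tenT_matT

variable {n : ℕ}

lemma tenT_one : tenT (1 : Matrix (Fin n3 × Fin n) (Fin n3 × Fin n) ℂ) = idT := by
  funext i
  ext a b
  simp only [tenT, idT, Matrix.of_apply, Matrix.one_apply, Prod.mk.injEq]
  rw [Finset.sum_eq_single ⟨0, i.pos⟩ (fun t _ ht => by simp [ht]) (by simp)]
  by_cases hi : i.1 = 0 <;> simp [hi, Matrix.one_apply]

lemma matT_idT : matT (idT : Tensor n n n3) = 1 := by
  rw [← tenT_one, matT_tenT (by rw [Matrix.mul_one, Matrix.one_mul])]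

lemma matT_cpow (A : Tensor n n n3) (m : ℕ) : matT (cpow A m) = matT A ^ m := by
  induction m with
  | zero => exact matT_idT
  | succ m ih => rw [cpow, matT_cmul, ih, pow_succ]

lemma isInverse_iff_matT {B W : Tensor n n n3} :
    IsInverse B W ↔ matT B * matT W = 1 ∧ matT W * matT B = 1 := by
  simp only [IsInverse, ← matT_injective.eq_iff, matT_cmul, matT_idT]

lemma exists_isInverse_of_isUnit {B : Tensor n n n3} (hB : IsUnit (matT B)) :
    ∃ W, IsInverse B W ∧ matT W = (matT B)⁻¹ := by
  have hB' := (Matrix.isUnit_iff_isUnit_det _).mp hB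
  have hcomm : blockShift n3 n * (matT B)⁻¹ = (matT B)⁻¹ * blockShift n3 n := by
    obtain ⟨u, hu⟩ := hB
    have := (Commute.units_inv_right (a := blockShift n3 n) (u := u)
      (by rw [hu]; exact blockShift_mul_matT B)).eq
    rwa [Matrix.coe_units_inv, hu] at this
  refine ⟨tenT (matT B)⁻¹, isInverse_iff_matT.2 ?_, matT_tenT hcomm⟩
  rw [matT_tenT hcomm]
  exact ⟨Matrix.mul_nonsing_inv _ hB', Matrix.nonsing_inv_mul _ hB'⟩

lemma isDrazin_iff_matT {A X : Tensor n n n3} {k : ℕ} :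
    IsDrazin A k X ↔ (matT A).IsDrazinInv (matT X) k := by
  simp only [IsDrazin, Matrix.IsDrazinInv, ← matT_injective.eq_iff, matT_cmul, matT_cpow]

end Tensor

theorem stmt13_general {n r n3 : ℕ} (A : Tensor n n n3) (k : ℕ)
    (hk : IsIndex A k)
    (Q : Tensor n r n3) (D : Tensor r r n3) (R : Tensor r n n3)
    (hdec : cpow A k = cmul (cmul Q D) R)
    (hDinv : ∃ W, IsInverse D W)
    (hQ : ∃ W, IsInverse (cmul (conjT Q) Q) W)
    (hR : ∃ W, IsInverse (cmul R (conjT R)) W) :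
    ∃ W, IsInverse (cmul (cmul R A) Q) W ∧
      IsDrazin A k (cmul (cmul Q W) R) := by
  obtain ⟨C, hC⟩ := (matT A).exists_pow_eq_pow_succ_mul_of_rank_eq hk.1
  obtain ⟨Dinv, hDinv⟩ := hDinv
  obtain ⟨U, hU⟩ := hQ
  obtain ⟨V, hV⟩ := hR
  have hdec' : matT A ^ k = matT Q * matT D * matT R := by
    rw [← matT_cpow, hdec, matT_cmul, matT_cmul]
  have hD : IsUnit (matT D) := IsUnit.of_mul_eq_one _ (isInverse_iff_matT.1 hDinv).1
  have hL : matT U * matT (conjT Q) * matT Q = 1 := by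
    rw [Matrix.mul_assoc, ← matT_cmul]; exact (isInverse_iff_matT.1 hU).2
  have hR' : matT R * (matT (conjT R) * matT V) = 1 := by
    rw [← Matrix.mul_assoc, ← matT_cmul]; exact (isInverse_iff_matT.1 hV).1
  have hG := Matrix.isUnit_mul_mul_of_pow_eq hC hdec' hD hL hR'
  obtain ⟨W, hW, hWinv⟩ :=
    exists_isInverse_of_isUnit (B := cmul (cmul R A) Q) (by rwa [matT_cmul, matT_cmul])
  refine ⟨W, hW, isDrazin_iff_matT.2 ?_⟩
  rw [matT_cmul, matT_cmul, hWinv, matT_cmul, matT_cmul]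
  exact Matrix.isDrazinInv_of_pow_eq hG hdec' hD hL hR'

theorem stmt13 {n r n3 : ℕ} (A : Tensor n n n3) (k : ℕ)
    (hk : IsIndex A k) (hk1 : 1 ≤ k)
    (Q : Tensor n r n3) (D : Tensor r r n3) (R : Tensor r n n3)
    (hdec : cpow A k = cmul (cmul Q D) R)
    (hD : FDiag D) (hDinv : ∃ W, IsInverse D W)
    (hQ : ∃ W, IsInverse (cmul (conjT Q) Q) W)
    (hR : ∃ W, IsInverse (cmul R (conjT R)) W) :
    ∃ W, IsInverse (cmul (cmul R A) Q) W ∧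
      IsDrazin A k (cmul (cmul Q W) R) :=
  stmt13_general A k hk Q D R hdec hDinv hQ hR
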